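/- Let ψ₁,…,ψ_m be unit vectors in ℂ^d with priors p_k ≥ 0, Σ p_k = 1, and let W₁,…,W_m > 0 be weights such that S := Σ_ℓ W_ℓ |ψ_ℓ⟩⟨ψ_ℓ| is positive definite, and let (M_k) be the associated Belavkin weighted square-root measurement. If there exists a constant c > 0 such that p_k² ⟨ψ_k, M_k ψ_k⟩ = c W_k for all k, then (M_k) is optimal: for every POVM (N_k) on ℂ^d, Σ_k p_k ⟨ψ_k, M_k ψ_k⟩ ≥ Σ_k p_k ⟨ψ_k, N_k ψ_k⟩. -/

import Mathlib

open Matrix Filter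
open scoped ComplexOrder

noncomputable section

/-- The rank-one projector `|ψ⟩⟨ψ|` as a matrix. -/
def proj {d : ℕ} (ψ : Fin d → ℂ) : Matrix (Fin d) (Fin d) ℂ := vecMulVec ψ (star ψ)

/-- The (real) expectation value `⟨ψ, M ψ⟩`. -/
def expVal {d : ℕ} (M : Matrix (Fin d) (Fin d) ℂ) (ψ : Fin d → ℂ) : ℝ :=
  (star ψ ⬝ᵥ M *ᵥ ψ).re

/-- A POVM: a finite family of PSD matrices summing to the identity. -/
def IsPOVM {d m : ℕ} (M : Fin m → Matrix (Fin d) (Fin d) ℂ) : Prop :=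
  (∀ k, (M k).PosSemidef) ∧ ∑ k, M k = 1

/-- The square root of a positive semidefinite matrix, as `Matrix.PosSemidef.sqrt` was defined in
the older Mathlib. -/
def Matrix.PosSemidef.sqrt {n : Type*} [Fintype n] [DecidableEq n] {𝕜 : Type*} [RCLike 𝕜]
    {A : Matrix n n 𝕜} (hA : A.PosSemidef) : Matrix n n 𝕜 :=
  (hA.1.eigenvectorUnitary : Matrix n n 𝕜) *
    diagonal (fun i => ((√(hA.1.eigenvalues i) : ℝ) : 𝕜)) *
    (star hA.1.eigenvectorUnitary : Matrix n n 𝕜)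

/-!
Put `T := S^{1/2}` and `a k := ⟨ψ k, T⁻¹ ψ k⟩ ≥ 0`. Then `⟨ψ k, M k ψ k⟩ = W k * a k ^ 2`, so the
hypothesis says exactly that `p k * a k = √c` for every `k`. Cauchy–Schwarz for the inner product
`⟨x, y⟩_T = x* T y` gives `|ψ⟩⟨ψ| ≤ ⟨ψ, T⁻¹ ψ⟩ T`, hence `Y := √c T` dominates every
`p k |ψ k⟩⟨ψ k|`. For any POVM `N` this bounds the success probability by
`∑ tr (Y N k) = tr Y`, and `tr Y = √c tr (T⁻¹ S) = √c ∑ W k a k = ∑ p k W k a k ^ 2`,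
which is the success probability of `M`.
-/

open scoped MatrixOrder

namespace Matrix

section
variable {n 𝕜 : Type*} [Fintype n] [RCLike 𝕜]

section sqrt
variable [DecidableEq n] {A : Matrix n n 𝕜}

theorem PosSemidef.sqrt_eq_cfcSqrt (hA : A.PosSemidef) : hA.sqrt = CFC.sqrt A := by
  rw [CFC.sqrt_eq_real_sqrt A hA.nonneg, cfcₙ_eq_cfc, hA.1.cfc_eq]
  rfl

theorem PosSemidef.sqrt_mul_self (hA : A.PosSemidef) : hA.sqrt * hA.sqrt = A := by
  rw [hA.sqrt_eq_cfcSqrt]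
  exact CFC.sqrt_mul_sqrt_self A hA.nonneg

theorem PosDef.posDef_sqrt (hA : A.PosDef) : hA.posSemidef.sqrt.PosDef := by
  rw [hA.posSemidef.sqrt_eq_cfcSqrt, ← isStrictlyPositive_iff_posDef]
  exact hA.isStrictlyPositive.sqrt

end sqrt

theorem PosSemidef.trace_mul_nonneg {A B : Matrix n n 𝕜} (hA : A.PosSemidef)
    (hB : B.PosSemidef) : 0 ≤ (A * B).trace := by
  classical
  obtain ⟨X, rfl⟩ := CStarAlgebra.nonneg_iff_eq_star_mul_self.mp hB.nonneg
  rw [← Matrix.mul_assoc, trace_mul_cycle]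
  exact (hA.mul_mul_conjTranspose_same X).trace_nonneg

theorem PosSemidef.norm_dotProduct_mulVec_sq_le {T : Matrix n n 𝕜} (hT : T.PosSemidef)
    (u x : n → 𝕜) :
    ‖star u ⬝ᵥ T *ᵥ x‖ ^ 2 ≤
      RCLike.re (star u ⬝ᵥ T *ᵥ u) * RCLike.re (star x ⬝ᵥ T *ᵥ x) := by
  let := T.toSeminormedAddCommGroup hT
  let := T.toInnerProductSpace hT
  have hinner (y z : n → 𝕜) : (inner 𝕜 y z : 𝕜) = star y ⬝ᵥ T *ᵥ z := dotProduct_comm _ _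
  have := inner_mul_inner_self_le (𝕜 := 𝕜) u x
  rwa [← inner_conj_symm x u, RCLike.norm_conj, ← sq, hinner, hinner, hinner] at this

end

end Matrix

section
variable {d : ℕ}

theorem trace_proj_mul (ψ : Fin d → ℂ) (A : Matrix (Fin d) (Fin d) ℂ) :
    (proj ψ * A).trace = star ψ ⬝ᵥ A *ᵥ ψ := by
  rw [proj, vecMulVec_mul, trace_vecMulVec, dotProduct_comm, ← dotProduct_mulVec]

theorem dotProduct_proj_mulVec (ψ x : Fin d → ℂ) :
    star x ⬝ᵥ proj ψ *ᵥ x = (‖star ψ ⬝ᵥ x‖ ^ 2 : ℝ) := by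
  rw [proj, vecMulVec_mulVec, dotProduct_smul, MulOpposite.smul_eq_mul_unop,
    MulOpposite.unop_op, star_dotProduct, Complex.ofReal_pow, ← Complex.conj_mul']
  rfl

theorem expVal_proj (ψ x : Fin d → ℂ) : expVal (proj ψ) x = ‖star ψ ⬝ᵥ x‖ ^ 2 := by
  rw [expVal, dotProduct_proj_mulVec, Complex.ofReal_re]

theorem expVal_smul (w : ℝ) (A : Matrix (Fin d) (Fin d) ℂ) (ψ : Fin d → ℂ) :
    expVal (w • A) ψ = w * expVal A ψ := by
  simp [expVal, smul_mulVec, dotProduct_smul]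

theorem expVal_sub (A B : Matrix (Fin d) (Fin d) ℂ) (ψ : Fin d → ℂ) :
    expVal (A - B) ψ = expVal A ψ - expVal B ψ := by
  simp [expVal, sub_mulVec, dotProduct_sub]

theorem expVal_conjTranspose_mul_mul (A B : Matrix (Fin d) (Fin d) ℂ) (ψ : Fin d → ℂ) :
    expVal (Aᴴ * B * A) ψ = expVal B (A *ᵥ ψ) := by
  rw [expVal, expVal, star_mulVec, ← dotProduct_mulVec]
  simp only [mulVec_mulVec, Matrix.mul_assoc]

theorem Matrix.IsHermitian.ofReal_expVal {A : Matrix (Fin d) (Fin d) ℂ} (hA : A.IsHermitian)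
    (ψ : Fin d → ℂ) : (expVal A ψ : ℂ) = star ψ ⬝ᵥ A *ᵥ ψ :=
  Complex.ext rfl (by simpa using (hA.im_star_dotProduct_mulVec_self ψ).symm)

theorem Matrix.IsHermitian.posSemidef_of_expVal_nonneg {A : Matrix (Fin d) (Fin d) ℂ}
    (hA : A.IsHermitian) (h : ∀ x, 0 ≤ expVal A x) : A.PosSemidef :=
  .of_dotProduct_mulVec_nonneg hA fun x => by
    rw [← hA.ofReal_expVal]
    exact_mod_cast h x

theorem Matrix.IsHermitian.expVal_mul_smul_proj_mul {A : Matrix (Fin d) (Fin d) ℂ}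
    (hA : A.IsHermitian) (w : ℝ) (ψ : Fin d → ℂ) :
    expVal (A * (w • proj ψ) * A) ψ = w * expVal A ψ ^ 2 := by
  have h := expVal_conjTranspose_mul_mul A (w • proj ψ) ψ
  rw [hA.eq] at h
  rw [h, expVal_smul, expVal_proj, ← hA.ofReal_expVal, Complex.norm_real, Real.norm_eq_abs,
    sq_abs]

theorem Matrix.PosDef.proj_le_expVal_inv_smul {T : Matrix (Fin d) (Fin d) ℂ} (hT : T.PosDef)
    (ψ : Fin d → ℂ) : proj ψ ≤ expVal T⁻¹ ψ • T := by
  have hTinv : T⁻¹ᴴ = T⁻¹ := hT.inv.isHermitian.eq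
  have hinv_mul : T⁻¹ * T = 1 := nonsing_inv_mul T ((isUnit_iff_isUnit_det T).mp hT.isUnit)
  have hP : (proj ψ).PosSemidef := posSemidef_vecMulVec_self_star ψ
  refine ((hT.isHermitian.smul (IsSelfAdjoint.all _)).sub
    hP.isHermitian).posSemidef_of_expVal_nonneg fun x => ?_
  set u := T⁻¹ *ᵥ ψ
  have hux : star u ⬝ᵥ T *ᵥ x = star ψ ⬝ᵥ x := by
    rw [star_mulVec, hTinv, ← dotProduct_mulVec, mulVec_mulVec, hinv_mul, one_mulVec]
  have huu : expVal T u = expVal T⁻¹ ψ := by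
    rw [← expVal_conjTranspose_mul_mul, hTinv, hinv_mul, Matrix.one_mul]
  have hcs := hT.posSemidef.norm_dotProduct_mulVec_sq_le u x
  rw [hux] at hcs
  rw [expVal_sub, expVal_smul, expVal_proj, ← huu]
  exact sub_nonneg.mpr hcs

end

theorem IsPOVM.sum_trace_mul_le {d m : ℕ} {N : Fin m → Matrix (Fin d) (Fin d) ℂ} (hN : IsPOVM N)
    {ρ : Fin m → Matrix (Fin d) (Fin d) ℂ} {Y : Matrix (Fin d) (Fin d) ℂ} (hY : ∀ k, ρ k ≤ Y) :
    ∑ k, (ρ k * N k).trace ≤ Y.trace :=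
  calc ∑ k, (ρ k * N k).trace ≤ ∑ k, (Y * N k).trace := Finset.sum_le_sum fun k _ => by
        rw [← sub_nonneg, ← trace_sub, ← sub_mul]
        exact (le_iff.mp (hY k)).trace_mul_nonneg (hN.1 k)
    _ = Y.trace := by rw [← trace_sum, ← Finset.mul_sum, hN.2, Matrix.mul_one]

theorem re_trace_eq_sum_expVal_inv_of_mul_self_eq {d : ℕ} {ι : Type*} [Fintype ι]
    {T : Matrix (Fin d) (Fin d) ℂ} (hT : IsUnit T) {W : ι → ℝ} {ψ : ι → Fin d → ℂ}
    (h : T * T = ∑ ℓ, W ℓ • proj (ψ ℓ)) : T.trace.re = ∑ ℓ, W ℓ * expVal T⁻¹ (ψ ℓ) := by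
  have hT' : T = T⁻¹ * (T * T) := by
    rw [← Matrix.mul_assoc, nonsing_inv_mul T ((isUnit_iff_isUnit_det T).mp hT), Matrix.one_mul]
  conv_lhs => rw [hT', h]
  rw [Finset.mul_sum, trace_sum, Complex.re_sum]
  refine Finset.sum_congr rfl fun ℓ _ => ?_
  rw [mul_smul_comm, trace_smul, trace_mul_comm, trace_proj_mul, Complex.real_smul,
    Complex.re_ofReal_mul, expVal]

theorem weighted_condition_implies_optimal_general {d m : ℕ}
    (ψ : Fin m → Fin d → ℂ)
    (p : Fin m → ℝ) (hp : ∀ k, 0 ≤ p k)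
    (W : Fin m → ℝ) (hW : ∀ k, 0 < W k)
    (hS : (∑ ℓ, W ℓ • proj (ψ ℓ)).PosDef)
    (M : Fin m → Matrix (Fin d) (Fin d) ℂ)
    (hM : ∀ k, M k = (hS.posSemidef.sqrt)⁻¹ * (W k • proj (ψ k)) * (hS.posSemidef.sqrt)⁻¹)
    (c : ℝ)
    (hcond : ∀ k, p k ^ 2 * expVal (M k) (ψ k) = c * W k) :
    ∀ N : Fin m → Matrix (Fin d) (Fin d) ℂ, IsPOVM N →
      ∑ k, p k * expVal (N k) (ψ k) ≤ ∑ k, p k * expVal (M k) (ψ k) := by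
  intro N hN
  set T := hS.posSemidef.sqrt
  have hT : T.PosDef := hS.posDef_sqrt
  have hMψ k : expVal (M k) (ψ k) = W k * expVal T⁻¹ (ψ k) ^ 2 := by
    rw [hM k, hT.inv.isHermitian.expVal_mul_smul_proj_mul]
  have hpa k : p k * expVal T⁻¹ (ψ k) = √c := by
    have hsq : (p k * expVal T⁻¹ (ψ k)) ^ 2 = c := by
      have h := hcond k
      rw [hMψ k] at h
      exact mul_right_cancel₀ (hW k).ne' (by linear_combination h)
    rw [← hsq]
    exact (Real.sqrt_sq (mul_nonneg (hp k) (hT.inv.posSemidef.re_dotProduct_nonneg _))).symm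
  have hbound k : p k • proj (ψ k) ≤ √c • T := by
    rw [← hpa k, mul_smul]
    exact smul_le_smul_of_nonneg_left (hT.proj_le_expVal_inv_smul (ψ k)) (hp k)
  calc ∑ k, p k * expVal (N k) (ψ k) = (∑ k, (p k • proj (ψ k) * N k).trace).re := by
        simp [Complex.re_sum, trace_smul, trace_proj_mul, expVal]
    _ ≤ (√c • T).trace.re := Complex.re_le_re (hN.sum_trace_mul_le hbound)
    _ = ∑ k, p k * expVal (M k) (ψ k) := by
        rw [trace_smul, Complex.smul_re, re_trace_eq_sum_expVal_inv_of_mul_self_eq hT.isUnit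
          hS.posSemidef.sqrt_mul_self, smul_eq_mul, Finset.mul_sum]
        refine Finset.sum_congr rfl fun k _ => ?_
        rw [hMψ k, ← hpa k]
        ring

/-- optimality condition for positively-weighted measurements: if there is a
constant `c > 0` with `p k ^ 2 * ⟨ψ k, M k ψ k⟩ = c * W k` for all `k`, then the Belavkin
weighted square-root measurement with weights `W k > 0` is optimal. -/
theorem weighted_condition_implies_optimal {d m : ℕ}
    (ψ : Fin m → Fin d → ℂ) (hψ : ∀ k, star (ψ k) ⬝ᵥ ψ k = 1)
    (p : Fin m → ℝ) (hp : ∀ k, 0 ≤ p k) (hp1 : ∑ k, p k = 1)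
    (W : Fin m → ℝ) (hW : ∀ k, 0 < W k)
    (hS : (∑ ℓ, W ℓ • proj (ψ ℓ)).PosDef)
    (M : Fin m → Matrix (Fin d) (Fin d) ℂ)
    (hM : ∀ k, M k = (hS.posSemidef.sqrt)⁻¹ * (W k • proj (ψ k)) * (hS.posSemidef.sqrt)⁻¹)
    (c : ℝ) (hc : 0 < c)
    (hcond : ∀ k, p k ^ 2 * expVal (M k) (ψ k) = c * W k) :
    ∀ N : Fin m → Matrix (Fin d) (Fin d) ℂ, IsPOVM N →
      ∑ k, p k * expVal (N k) (ψ k) ≤ ∑ k, p k * expVal (M k) (ψ k) :=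
  weighted_condition_implies_optimal_general ψ p hp W hW hS M hM c hcond
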